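/- In 𝒰, if there exist i, j ∈ I with c_{ij} = c_{ji} = −1, then [h_{i,1}, h_{i,3}] = 0, h_{i,4} = [b_{i,0}, b_{i,4}] = 0, and [b_{i,1}, b_{i,3}] = 0. -/

import Mathlib

noncomputable section

/-- Data of a symmetrizable generalized Cartan matrix `(c_{ij})` (of finite type size bounds)
together with a positive symmetrizer `(d_i)`. -/
structure CartanData (I : Type) [Fintype I] : Type where
  c : I → I → ℤ
  d : I → ℝ
  c_diag : ∀ i, c i i = 2
  c_nonpos : ∀ i j, i ≠ j → c i j ≤ 0
  c_zero_iff : ∀ i j, c i j = 0 ↔ c j i = 0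
  c_bound : ∀ i j, i ≠ j → c i j * c j i ≤ 3
  d_pos : ∀ i, 0 < d i
  d_symm : ∀ i j, d i * (c i j : ℝ) = d j * (c j i : ℝ)

/-- The pairing `(α_i, α_j) = d_i · c_{ij}`. -/
def CartanData.al {I : Type} [Fintype I] (A : CartanData I) (i j : I) : ℝ :=
  A.d i * (A.c i j : ℝ)

/-- Generators for Drinfeld-type presentations: `h i r` stands for `h_{i,2r+1}` and
`b i r` stands for `b_{i,r}`. -/
inductive TYGen (I : Type) : Type
  | h : I → ℕ → TYGen I
  | b : I → ℕ → TYGen I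

section Algebras

variable {I : Type} [Fintype I] [DecidableEq I]

/-- The element `h_{i,r}` of the free algebra, for `r : ℤ`, with the conventions
`h_{i,-1} = 1` and `h_{i,r} = 0` for `r` even or `r < -1`. -/
def TYh (i : I) (r : ℤ) : FreeAlgebra ℂ (TYGen I) :=
  if r = -1 then 1
  else if 0 ≤ r ∧ r % 2 = 1 then FreeAlgebra.ι ℂ (TYGen.h i ((r - 1) / 2).toNat)
  else 0

/-- The generator `b_{i,r}` of the free algebra. -/
def TYb (i : I) (r : ℕ) : FreeAlgebra ℂ (TYGen I) := FreeAlgebra.ι ℂ (TYGen.b i r)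

/-- The generator `h_{i,2r+1}` of the free algebra. -/
def TYhodd (i : I) (r : ℕ) : FreeAlgebra ℂ (TYGen I) := FreeAlgebra.ι ℂ (TYGen.h i r)

/-- The element `h_{i,n}` of the free algebra, `n : ℕ`, with the convention `h_{i,2r} = 0`. -/
def TYhnat (i : I) (n : ℕ) : FreeAlgebra ℂ (TYGen I) :=
  if n % 2 = 1 then FreeAlgebra.ι ℂ (TYGen.h i ((n - 1) / 2)) else 0

/-- Defining relations of the twisted Yangian `ᵢY` in Drinfeld presentation. -/
inductive TYRel (A : CartanData I) : FreeAlgebra ℂ (TYGen I) → FreeAlgebra ℂ (TYGen I) → Prop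
  | ty0 (i j : I) (r s : ℤ) : TYRel A ⁅TYh i r, TYh j s⁆ 0
  | ty1 (i j : I) (r s : ℕ) :
      TYRel A (⁅TYh i ((r : ℤ) + 1), TYb j s⁆ - ⁅TYh i ((r : ℤ) - 1), TYb j (s + 2)⁆)
        ((A.al i j : ℂ) •
            (TYh i ((r : ℤ) - 1) * TYb j (s + 1) + TYb j (s + 1) * TYh i ((r : ℤ) - 1))
          + (((A.al i j : ℂ) ^ 2 / 4) • ⁅TYh i ((r : ℤ) - 1), TYb j s⁆))
  | ty2 (i j : I) (r s : ℕ) :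
      TYRel A (⁅TYb i (r + 1), TYb j s⁆ - ⁅TYb i r, TYb j (s + 1)⁆)
        (((A.al i j : ℂ) / 2) • (TYb i r * TYb j s + TYb j s * TYb i r)
          - (if i = j then (2 : ℂ) * (-1 : ℂ) ^ s else 0) • TYh i ((r : ℤ) + (s : ℤ) + 1))
  | serre0 (i j : I) (hc : A.c i j = 0) : TYRel A ⁅TYb i 0, TYb j 0⁆ 0
  | serre1 (i j : I) (hc : A.c i j = -1) :
      TYRel A ⁅TYb i 0, ⁅TYb i 0, TYb j 0⁆⁆ ((-(A.d i : ℂ)) • TYb j 0)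
  | serre2 (i j : I) (hc : A.c i j = -2) :
      TYRel A ⁅TYb i 0, ⁅TYb i 0, ⁅TYb i 0, TYb j 0⁆⁆⁆
        (((-4 : ℂ) * (A.d i : ℂ)) • ⁅TYb i 0, TYb j 0⁆)
  | serre3 (i j : I) (hc : A.c i j = -3) :
      TYRel A ⁅TYb i 0, ⁅TYb i 0, ⁅TYb i 0, ⁅TYb i 0, TYb j 0⁆⁆⁆⁆
        (((-10 : ℂ) * (A.d i : ℂ)) • ⁅TYb i 0, ⁅TYb i 0, TYb j 0⁆⁆
          + ((-9 : ℂ) * (A.d i : ℂ) ^ 2) • TYb j 0)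

/-- The twisted Yangian `ᵢY` in Drinfeld presentation. -/
abbrev TY (A : CartanData I) : Type := RingQuot (TYRel A)

/-- The generator `h_{i,2r+1}` of the twisted Yangian `ᵢY`. -/
def tyH (A : CartanData I) (i : I) (r : ℕ) : TY A :=
  RingQuot.mkAlgHom ℂ (TYRel A) (TYhodd i r)

/-- The generator `b_{i,r}` of the twisted Yangian `ᵢY`. -/
def tyB (A : CartanData I) (i : I) (r : ℕ) : TY A :=
  RingQuot.mkAlgHom ℂ (TYRel A) (TYb i r)

/-- Defining relations of the algebra `𝔅` (the presentation of `U(g[z]^ω̌)`). -/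
inductive BRel (A : CartanData I) : FreeAlgebra ℂ (TYGen I) → FreeAlgebra ℂ (TYGen I) → Prop
  | hh (i j : I) (r s : ℕ) : BRel A ⁅TYhodd i r, TYhodd j s⁆ 0
  | hb (i j : I) (r s : ℕ) :
      BRel A ⁅TYhodd i r, TYb j s⁆ ((2 * (A.al i j : ℂ)) • TYb j (2 * r + s + 1))
  | bb (i j : I) (r s : ℕ) :
      BRel A (⁅TYb i (r + 1), TYb j s⁆ - ⁅TYb i r, TYb j (s + 1)⁆)
        ((-(if i = j then (-1 : ℂ) ^ r + (-1 : ℂ) ^ s else 0)) • TYhnat i (r + s + 1))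
  | serre0 (i j : I) (hc : A.c i j = 0) : BRel A ⁅TYb i 0, TYb j 0⁆ 0
  | serre1 (i j : I) (hc : A.c i j = -1) :
      BRel A ⁅TYb i 0, ⁅TYb i 0, TYb j 0⁆⁆ ((-(A.d i : ℂ)) • TYb j 0)
  | serre2 (i j : I) (hc : A.c i j = -2) :
      BRel A ⁅TYb i 0, ⁅TYb i 0, ⁅TYb i 0, TYb j 0⁆⁆⁆
        (((-4 : ℂ) * (A.d i : ℂ)) • ⁅TYb i 0, TYb j 0⁆)
  | serre3 (i j : I) (hc : A.c i j = -3) :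
      BRel A ⁅TYb i 0, ⁅TYb i 0, ⁅TYb i 0, ⁅TYb i 0, TYb j 0⁆⁆⁆⁆
        (((-10 : ℂ) * (A.d i : ℂ)) • ⁅TYb i 0, ⁅TYb i 0, TYb j 0⁆⁆
          + ((-9 : ℂ) * (A.d i : ℂ) ^ 2) • TYb j 0)

/-- The algebra `𝔅`. -/
abbrev BAlg (A : CartanData I) : Type := RingQuot (BRel A)

/-- The generator `h_{i,2r+1}` of `𝔅`. -/
def hB (A : CartanData I) (i : I) (r : ℕ) : BAlg A :=
  RingQuot.mkAlgHom ℂ (BRel A) (TYhodd i r)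

/-- The generator `b_{i,r}` of `𝔅`. -/
def bB (A : CartanData I) (i : I) (r : ℕ) : BAlg A :=
  RingQuot.mkAlgHom ℂ (BRel A) (TYb i r)

end Algebras

/-- Generators `h_{i,1}`, `b_{i,0}`, `b_{i,1}` for the minimalistic presentations. -/
inductive MinGen (I : Type) : Type
  | h1 : I → MinGen I
  | b0 : I → MinGen I
  | b1 : I → MinGen I

section MinAlgebras

variable {I : Type} [Fintype I] [DecidableEq I]

/-- The generator `h_{i,1}` of the free algebra. -/
def mh (i : I) : FreeAlgebra ℂ (MinGen I) := FreeAlgebra.ι ℂ (MinGen.h1 i)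

/-- The generator `b_{i,0}` of the free algebra. -/
def mb0 (i : I) : FreeAlgebra ℂ (MinGen I) := FreeAlgebra.ι ℂ (MinGen.b0 i)

/-- The generator `b_{i,1}` of the free algebra. -/
def mb1 (i : I) : FreeAlgebra ℂ (MinGen I) := FreeAlgebra.ι ℂ (MinGen.b1 i)

/-- Defining relations of the minimalistic presentation `ᵢY^min`. -/
inductive MinRel (A : CartanData I) : FreeAlgebra ℂ (MinGen I) → FreeAlgebra ℂ (MinGen I) → Prop
  | hh (i j : I) : MinRel A ⁅mh i, mh j⁆ 0
  | hb (i j : I) : MinRel A ⁅mh i, mb0 j⁆ ((2 * (A.al i j : ℂ)) • mb1 j)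
  | bb (i j : I) :
      MinRel A (⁅mb1 i, mb0 j⁆ - ⁅mb0 i, mb1 j⁆)
        (((A.al i j : ℂ) / 2) • (mb0 i * mb0 j + mb0 j * mb0 i)
          - (if i = j then (2 : ℂ) else 0) • mh i)
  | serre0 (i j : I) (hc : A.c i j = 0) : MinRel A ⁅mb0 i, mb0 j⁆ 0
  | serre1 (i j : I) (hc : A.c i j = -1) :
      MinRel A ⁅mb0 i, ⁅mb0 i, mb0 j⁆⁆ ((-(A.d i : ℂ)) • mb0 j)
  | serre2 (i j : I) (hc : A.c i j = -2) :
      MinRel A ⁅mb0 i, ⁅mb0 i, ⁅mb0 i, mb0 j⁆⁆⁆ (((-4 : ℂ) * (A.d i : ℂ)) • ⁅mb0 i, mb0 j⁆)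
  | serre3 (i j : I) (hc : A.c i j = -3) :
      MinRel A ⁅mb0 i, ⁅mb0 i, ⁅mb0 i, ⁅mb0 i, mb0 j⁆⁆⁆⁆
        (((-10 : ℂ) * (A.d i : ℂ)) • ⁅mb0 i, ⁅mb0 i, mb0 j⁆⁆
          + ((-9 : ℂ) * (A.d i : ℂ) ^ 2) • mb0 j)

/-- The relations of `ᵢY^min` together with the additional relation
`[h_{i₀,1},[b_{i₀,1},[h_{i₀,1},b_{i₀,1}]]] = (α_{i₀},α_{i₀})² [b_{i₀,1}², h_{i₀,1}]`. -/
inductive MinRelP (A : CartanData I) (i₀ : I) :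
    FreeAlgebra ℂ (MinGen I) → FreeAlgebra ℂ (MinGen I) → Prop
  | base {x y : FreeAlgebra ℂ (MinGen I)} : MinRel A x y → MinRelP A i₀ x y
  | extra : MinRelP A i₀ ⁅mh i₀, ⁅mb1 i₀, ⁅mh i₀, mb1 i₀⁆⁆⁆
      (((A.al i₀ i₀ : ℂ) ^ 2) • ⁅mb1 i₀ * mb1 i₀, mh i₀⁆)

/-- Defining relations of the algebra `𝒰`. -/
inductive URel (A : CartanData I) : FreeAlgebra ℂ (MinGen I) → FreeAlgebra ℂ (MinGen I) → Prop
  | hh (i j : I) : URel A ⁅mh i, mh j⁆ 0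
  | hb (i j : I) : URel A ⁅mh i, mb0 j⁆ ((2 * (A.al i j : ℂ)) • mb1 j)
  | bb (i j : I) :
      URel A ⁅mb1 i, mb0 j⁆ (⁅mb0 i, mb1 j⁆ - (if i = j then (2 : ℂ) else 0) • mh i)
  | serre0 (i j : I) (hc : A.c i j = 0) : URel A ⁅mb0 i, mb0 j⁆ 0
  | serre1 (i j : I) (hc : A.c i j = -1) :
      URel A ⁅mb0 i, ⁅mb0 i, mb0 j⁆⁆ ((-(A.d i : ℂ)) • mb0 j)
  | serre2 (i j : I) (hc : A.c i j = -2) :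
      URel A ⁅mb0 i, ⁅mb0 i, ⁅mb0 i, mb0 j⁆⁆⁆ (((-4 : ℂ) * (A.d i : ℂ)) • ⁅mb0 i, mb0 j⁆)
  | serre3 (i j : I) (hc : A.c i j = -3) :
      URel A ⁅mb0 i, ⁅mb0 i, ⁅mb0 i, ⁅mb0 i, mb0 j⁆⁆⁆⁆
        (((-10 : ℂ) * (A.d i : ℂ)) • ⁅mb0 i, ⁅mb0 i, mb0 j⁆⁆
          + ((-9 : ℂ) * (A.d i : ℂ) ^ 2) • mb0 j)

/-- The relations of `𝒰` together with the additional relation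
`[h_{i₀,1},[b_{i₀,1},[h_{i₀,1},b_{i₀,1}]]] = 0`. -/
inductive URelP (A : CartanData I) (i₀ : I) :
    FreeAlgebra ℂ (MinGen I) → FreeAlgebra ℂ (MinGen I) → Prop
  | base {x y : FreeAlgebra ℂ (MinGen I)} : URel A x y → URelP A i₀ x y
  | extra : URelP A i₀ ⁅mh i₀, ⁅mb1 i₀, ⁅mh i₀, mb1 i₀⁆⁆⁆ 0

/-- The algebra `𝒰`. -/
abbrev UAlg (A : CartanData I) : Type := RingQuot (URel A)

/-- The generator `h_{i,1}` of `𝒰`. -/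
def uH1 (A : CartanData I) (i : I) : UAlg A := RingQuot.mkAlgHom ℂ (URel A) (mh i)

/-- The generator `b_{i,0}` of `𝒰`. -/
def uB0 (A : CartanData I) (i : I) : UAlg A := RingQuot.mkAlgHom ℂ (URel A) (mb0 i)

/-- The generator `b_{i,1}` of `𝒰`. -/
def uB1 (A : CartanData I) (i : I) : UAlg A := RingQuot.mkAlgHom ℂ (URel A) (mb1 i)

/-- The elements `b_{i,r}` of `𝒰`, defined recursively by
`b_{i,r+1} := (2(α_i,α_i))⁻¹ [h_{i,1}, b_{i,r}]` for `r ≥ 1`. -/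
def uB (A : CartanData I) (i : I) : ℕ → UAlg A
  | 0 => uB0 A i
  | 1 => uB1 A i
  | r + 2 => (2 * (A.al i i : ℂ))⁻¹ • ⁅uH1 A i, uB A i (r + 1)⁆

/-- The elements `h_{i,r}` of `𝒰`: `h_{i,0} := 0`, `h_{i,1}` is the generator, and
`h_{i,r+1} := [b_{i,0}, b_{i,r+1}]` for `r ≥ 1`. -/
def uH (A : CartanData I) (i : I) : ℕ → UAlg A
  | 0 => 0
  | 1 => uH1 A i
  | r + 2 => ⁅uB0 A i, uB A i (r + 2)⁆

end MinAlgebras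

/-!
The relations of `𝒰` say that `ad h_{k,1}` acts on each sequence `r ↦ b_{l,r}` as `2(α_k,α_l)`
times the index shift (`IsLadder`), so applying these derivations propagates relations from low
degree. Along `b_{i,·}` alone this gives `[b_{i,0}, b_{i,4}] = -2 [b_{i,1}, b_{i,3}]` and
`[h_{i,1}, h_{i,3}] = 4 d_i ([b_{i,1}, b_{i,3}] + [b_{i,0}, b_{i,4}])`. For `i ≠ j`, the weight
matrix `(2(α_k,α_l))_{k,l ∈ {i,j}}` is invertible since `c_{ij} c_{ji} < 4`, which makes
`[b_{i,r}, b_{j,s}]` depend only on `r + s`. When `c_{ij} = c_{ji} = -1`, combinations of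
`h_{i,1}` and `h_{j,1}` that kill one of the factors spread the Serre relation to
`[b_{i,r}, [b_{i,0}, b_{j,s}]] = (-1)^(r+1) d_i b_{j,r+s}`, and two instances of the Jacobi
identity then force `[b_{i,0}, b_{i,4}] = 0`; everything else follows.
-/

section Ladder

variable {K L : Type*} [Field K] [LieRing L] [LieAlgebra K L]

theorem eq_zero_of_smul_add_smul_eq_zero {M : Type*} [AddCommGroup M] [Module K M]
    {a b c d : K} {u v : M} (hdet : a * d - b * c ≠ 0)
    (h₁ : a • u + b • v = 0) (h₂ : c • u + d • v = 0) : u = 0 ∧ v = 0 := by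
  have hu : (a * d - b * c) • u = 0 := by
    linear_combination (norm := module) d • h₁ - b • h₂
  have hv : (a * d - b * c) • v = 0 := by
    linear_combination (norm := module) a • h₂ - c • h₁
  exact ⟨(smul_eq_zero.mp hu).resolve_left hdet, (smul_eq_zero.mp hv).resolve_left hdet⟩

def IsLadder (h : L) (a : K) (x : ℕ → L) : Prop :=
  ∀ r, ⁅h, x r⁆ = a • x (r + 1)

namespace IsLadder

variable {h h' z y : L} {a b c d μ ν β : K} {x u v : ℕ → L}

theorem smul_add_smul (hx : IsLadder h a x) (hx' : IsLadder h' b x) {p q e : K}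
    (he : p * a + q * b = e) : IsLadder (p • h + q • h') e x := fun r => by
  rw [add_lie, smul_lie, smul_lie, hx, hx', ← he, add_smul, mul_smul, mul_smul]

theorem lie_lie (hx : IsLadder h a x) (hu : IsLadder h b u) (r s : ℕ) :
    ⁅h, ⁅x r, u s⁆⁆ = a • ⁅x (r + 1), u s⁆ + b • ⁅x r, u (s + 1)⁆ := by
  rw [leibniz_lie, hx, hu, smul_lie, lie_smul]

theorem lie_eq_smul (hμ : μ ≠ 0) (hy : ⁅z, y⁆ = 0) (hx : IsLadder z μ x) (hv : IsLadder z ν v)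
    (h₀ : ⁅y, x 0⁆ = β • v 0) (r : ℕ) : ⁅y, x r⁆ = (β * (ν / μ) ^ r) • v r := by
  induction r with
  | zero => simpa only [pow_zero, mul_one] using h₀
  | succ r ih =>
    have key : μ • ⁅y, x (r + 1)⁆ = μ • ((β * (ν / μ) ^ (r + 1)) • v (r + 1)) :=
      calc μ • ⁅y, x (r + 1)⁆ = ⁅z, ⁅y, x r⁆⁆ := by
            rw [leibniz_lie z y, hy, zero_lie, zero_add, hx, lie_smul]
        _ = (β * (ν / μ) ^ r * ν) • v (r + 1) := by rw [ih, lie_smul, hv, smul_smul]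
        _ = μ • ((β * (ν / μ) ^ (r + 1)) • v (r + 1)) := by
            rw [smul_smul]
            congr 1
            rw [pow_succ]
            field_simp
    exact smul_right_injective L hμ key

theorem lie_succ_eq_lie_succ (hdet : a * d - b * c ≠ 0)
    (hx : IsLadder h a x) (hu : IsLadder h b u) (hx' : IsLadder h' c x) (hu' : IsLadder h' d u)
    (h₀ : ⁅x 1, u 0⁆ = ⁅x 0, u 1⁆) (r s : ℕ) : ⁅x (r + 1), u s⁆ = ⁅x r, u (s + 1)⁆ := by
  set E : ℕ → ℕ → L := fun r s => ⁅x (r + 1), u s⁆ - ⁅x r, u (s + 1)⁆ with hE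
  have step : ∀ r s, E r s = 0 → E (r + 1) s = 0 ∧ E r (s + 1) = 0 := by
    intro r s hrs
    have e₁ : ⁅h, E r s⁆ = a • E (r + 1) s + b • E r (s + 1) := by
      simp only [hE, lie_sub, hx.lie_lie hu]
      module
    have e₂ : ⁅h', E r s⁆ = c • E (r + 1) s + d • E r (s + 1) := by
      simp only [hE, lie_sub, hx'.lie_lie hu']
      module
    rw [hrs, lie_zero] at e₁ e₂
    exact eq_zero_of_smul_add_smul_eq_zero hdet e₁.symm e₂.symm
  suffices E r s = 0 from sub_eq_zero.mp this
  induction s with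
  | zero =>
    induction r with
    | zero => exact sub_eq_zero.mpr h₀
    | succ r ih => exact (step r 0 ih).1
  | succ s ih => exact (step r s ih).2

theorem lie_eq_lie_zero_add (hdet : a * d - b * c ≠ 0)
    (hx : IsLadder h a x) (hu : IsLadder h b u) (hx' : IsLadder h' c x) (hu' : IsLadder h' d u)
    (h₀ : ⁅x 1, u 0⁆ = ⁅x 0, u 1⁆) (r s : ℕ) : ⁅x r, u s⁆ = ⁅x 0, u (r + s)⁆ := by
  induction r generalizing s with
  | zero => rw [zero_add]
  | succ r ih => rw [lie_succ_eq_lie_succ hdet hx hu hx' hu' h₀, ih, add_right_comm, add_assoc]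

theorem lie_zero_four (hμ : μ ≠ 0) (hx : IsLadder h μ x) (h₀₁ : ⁅x 0, x 1⁆ = h) :
    ⁅x 0, x 4⁆ = (-2 : K) • ⁅x 1, x 3⁆ := by
  have h₀₂ : ⁅x 0, x 2⁆ = 0 := by
    have e := hx.lie_lie hx 0 1
    rw [h₀₁, lie_self, lie_self, smul_zero, zero_add] at e
    exact (smul_eq_zero.mp e.symm).resolve_left hμ
  have h₀₃ : ⁅x 1, x 2⁆ + ⁅x 0, x 3⁆ = 0 := by
    have e := hx.lie_lie hx 0 2
    rw [h₀₂, lie_zero, ← smul_add] at e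
    exact (smul_eq_zero.mp e.symm).resolve_left hμ
  have e : μ • (⁅x 0, x 4⁆ + (2 : K) • ⁅x 1, x 3⁆) = 0 := by
    have e₁ := hx.lie_lie hx 1 2
    have e₂ := hx.lie_lie hx 0 3
    rw [lie_self] at e₁
    rw [← lie_zero h, ← h₀₃, lie_add]
    linear_combination (norm := module) -e₁ - e₂
  linear_combination (norm := module) (smul_eq_zero.mp e).resolve_left hμ

end IsLadder

end Ladder

namespace CartanData

variable {I : Type} [Fintype I] (A : CartanData I)

theorem al_self (i : I) : A.al i i = 2 * A.d i := by
  rw [al, A.c_diag]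
  push_cast
  ring

theorem al_eq_neg_d {i j : I} (hij : A.c i j = -1) : A.al i j = -A.d i := by
  rw [al, hij]
  push_cast
  ring

theorem d_eq_of_c_eq_neg_one {i j : I} (hij : A.c i j = -1) (hji : A.c j i = -1) :
    A.d j = A.d i := by
  have h := A.d_symm i j
  rw [hij, hji] at h
  push_cast at h
  linarith

theorem ne_of_c_eq_neg_one {i j : I} (hij : A.c i j = -1) : i ≠ j := by
  rintro rfl
  rw [A.c_diag] at hij
  exact absurd hij (by decide)

theorem two_mul_al_self_eq (i : I) : 2 * (A.al i i : ℂ) = 4 * A.d i := by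
  rw [al_self]
  push_cast
  ring

theorem two_mul_al_eq_of_c_eq_neg_one {i j : I} (hij : A.c i j = -1) :
    2 * (A.al i j : ℂ) = -2 * A.d i := by
  rw [al_eq_neg_d A hij]
  push_cast
  ring

theorem d_ne_zero (i : I) : (A.d i : ℂ) ≠ 0 :=
  Complex.ofReal_ne_zero.mpr (A.d_pos i).ne'

theorem al_mul_al_lt {i j : I} (hij : i ≠ j) : A.al i j * A.al j i < A.al i i * A.al j j := by
  have hc : ((A.c i j * A.c j i : ℤ) : ℝ) ≤ 3 := by exact_mod_cast A.c_bound i j hij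
  have hd := mul_pos (A.d_pos i) (A.d_pos j)
  rw [al_self, al_self, al, al]
  push_cast at hc
  nlinarith

end CartanData

section UAlg

variable {I : Type} [Fintype I] [DecidableEq I] (A : CartanData I)

attribute [local instance] LieRing.ofAssociativeRing

-- The `ℂ`-action on a `RingQuot` is not reducibly the one of `LieAlgebra.ofAssociativeAlgebra`,
-- so `lie_smul` does not rewrite in `UAlg A`.
theorem uAlg_lie_smul (t : ℂ) (x y : UAlg A) : ⁅x, t • y⁆ = t • ⁅x, y⁆ :=
  lie_smul t x y

theorem mkAlgHom_lie (x y : FreeAlgebra ℂ (MinGen I)) :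
    RingQuot.mkAlgHom ℂ (URel A) ⁅x, y⁆
      = ⁅RingQuot.mkAlgHom ℂ (URel A) x, RingQuot.mkAlgHom ℂ (URel A) y⁆ := by
  simp only [Ring.lie_def, map_sub, map_mul]

theorem uH1_lie_uH1 (i j : I) : ⁅uH1 A i, uH1 A j⁆ = 0 := by
  have h := RingQuot.mkAlgHom_rel ℂ (URel.hh (A := A) i j)
  rwa [mkAlgHom_lie, map_zero] at h

theorem uH1_lie_uB_zero (i j : I) :
    ⁅uH1 A i, uB A j 0⁆ = (2 * (A.al i j : ℂ)) • uB A j 1 := by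
  have h := RingQuot.mkAlgHom_rel ℂ (URel.hb (A := A) i j)
  rwa [mkAlgHom_lie, map_smul] at h

theorem uB_zero_lie_uB_one_self (i : I) : ⁅uB A i 0, uB A i 1⁆ = uH1 A i := by
  have h := RingQuot.mkAlgHom_rel ℂ (URel.bb (A := A) i i)
  rw [if_pos rfl, mkAlgHom_lie, map_sub, mkAlgHom_lie, map_smul] at h
  change ⁅uB A i 1, uB A i 0⁆ = ⁅uB A i 0, uB A i 1⁆ - (2 : ℂ) • uH1 A i at h
  rw [← lie_skew] at h
  linear_combination (norm := module) (-(1 : ℂ) / 2) • h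

theorem uB_one_lie_uB_zero {i j : I} (hij : i ≠ j) :
    ⁅uB A i 1, uB A j 0⁆ = ⁅uB A i 0, uB A j 1⁆ := by
  have h := RingQuot.mkAlgHom_rel ℂ (URel.bb (A := A) i j)
  rwa [if_neg hij, zero_smul, sub_zero, mkAlgHom_lie, mkAlgHom_lie] at h

theorem uB_zero_lie_uB_zero_lie_uB_zero {i j : I} (hij : A.c i j = -1) :
    ⁅uB A i 0, ⁅uB A i 0, uB A j 0⁆⁆ = (-(A.d i : ℂ)) • uB A j 0 := by
  have h := RingQuot.mkAlgHom_rel ℂ (URel.serre1 (A := A) i j hij)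
  rwa [mkAlgHom_lie, mkAlgHom_lie, map_smul] at h

theorem isLadder_uH1_uB_self (i : I) : IsLadder (uH1 A i) (4 * (A.d i : ℂ)) (uB A i) := by
  have hne : 2 * (A.al i i : ℂ) ≠ 0 := by
    rw [A.two_mul_al_self_eq]
    exact mul_ne_zero (by norm_num) (A.d_ne_zero i)
  rw [← A.two_mul_al_self_eq]
  rintro (_ | r)
  · exact uH1_lie_uB_zero A i i
  · rw [uB, smul_inv_smul₀ hne]

theorem isLadder_uH1_uB (i j : I) : IsLadder (uH1 A i) (2 * (A.al i j : ℂ)) (uB A j) := by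
  have hne : 4 * (A.d j : ℂ) ≠ 0 := mul_ne_zero (by norm_num) (A.d_ne_zero j)
  have hj := isLadder_uH1_uB_self A j
  intro r
  simpa only [div_self hne, one_pow, mul_one] using
    hj.lie_eq_smul hne (uH1_lie_uH1 A j i) (fun r => hj (r + 1)) (uH1_lie_uB_zero A i j) r

theorem isLadder_uH1_uB_of_c_eq_neg_one {i j : I} (hij : A.c i j = -1) :
    IsLadder (uH1 A i) (-2 * (A.d i : ℂ)) (uB A j) := by
  simpa only [A.two_mul_al_eq_of_c_eq_neg_one hij] using isLadder_uH1_uB A i j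

theorem uB_zero_lie_uB_four_self (i : I) :
    ⁅uB A i 0, uB A i 4⁆ = (-2 : ℂ) • ⁅uB A i 1, uB A i 3⁆ :=
  (isLadder_uH1_uB_self A i).lie_zero_four (mul_ne_zero (by norm_num) (A.d_ne_zero i))
    (uB_zero_lie_uB_one_self A i)

theorem uH_one_lie_uH_three (i : I) :
    ⁅uH A i 1, uH A i 3⁆ = (4 * (A.d i : ℂ)) • (⁅uB A i 1, uB A i 3⁆ + ⁅uB A i 0, uB A i 4⁆) := by
  have hi := isLadder_uH1_uB_self A i
  rw [uH, uH, ← uB, hi.lie_lie hi, smul_add]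

theorem uB_lie_uB {i j : I} (hij : i ≠ j) (r s : ℕ) :
    ⁅uB A i r, uB A j s⁆ = ⁅uB A i 0, uB A j (r + s)⁆ := by
  have hdet : 2 * (A.al i i : ℂ) * (2 * A.al j j) - 2 * A.al i j * (2 * A.al j i) ≠ 0 := by
    exact_mod_cast ne_of_gt (by nlinarith [A.al_mul_al_lt hij] :
      0 < 2 * A.al i i * (2 * A.al j j) - 2 * A.al i j * (2 * A.al j i))
  exact IsLadder.lie_eq_lie_zero_add hdet (isLadder_uH1_uB A i i) (isLadder_uH1_uB A i j)
    (isLadder_uH1_uB A j i) (isLadder_uH1_uB A j j) (uB_one_lie_uB_zero A hij) r s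

theorem uB_lie_uB_zero_lie_uB_zero {i j : I} (hij : A.c i j = -1) (hji : A.c j i = -1) (r : ℕ) :
    ⁅uB A i r, ⁅uB A i 0, uB A j 0⁆⁆ = ((-1) ^ (r + 1) * (A.d i : ℂ)) • uB A j r := by
  have hji' := isLadder_uH1_uB_of_c_eq_neg_one A hji
  have hjj := isLadder_uH1_uB_self A j
  rw [A.d_eq_of_c_eq_neg_one hij hji] at hji' hjj
  set δ : ℂ := (A.d i : ℂ)
  have h6δ : 6 * δ ≠ 0 := mul_ne_zero (by norm_num) (A.d_ne_zero i)
  -- `h_{i,1} - h_{j,1}` shifts `b_{i,·}` and `b_{j,·}` with opposite weights,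
  -- so it kills `[b_{i,0}, b_{j,0}]`
  have hzi := (isLadder_uH1_uB_self A i).smul_add_smul hji' (p := 1) (q := -1)
    (e := 6 * δ) (by ring)
  have hzj := (isLadder_uH1_uB_of_c_eq_neg_one A hij).smul_add_smul hjj (p := 1) (q := -1)
    (e := -(6 * δ)) (by ring)
  have hzX : ⁅(1 : ℂ) • uH1 A i + (-1 : ℂ) • uH1 A j, ⁅uB A i 0, uB A j 0⁆⁆ = 0 := by
    rw [hzi.lie_lie hzj, uB_one_lie_uB_zero A (A.ne_of_c_eq_neg_one hij)]
    module
  have hX : ⁅⁅uB A i 0, uB A j 0⁆, uB A i 0⁆ = δ • uB A j 0 := by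
    rw [← lie_skew, uB_zero_lie_uB_zero_lie_uB_zero A hij]
    module
  rw [← lie_skew, hzi.lie_eq_smul h6δ hzX hzj hX r, neg_div_self h6δ, ← neg_smul, pow_succ]
  ring_nf

theorem uB_lie_uB_zero_lie_uB {i j : I} (hij : A.c i j = -1) (hji : A.c j i = -1) (r s : ℕ) :
    ⁅uB A i r, ⁅uB A i 0, uB A j s⁆⁆ = ((-1) ^ (r + 1) * (A.d i : ℂ)) • uB A j (r + s) := by
  have hji' := isLadder_uH1_uB_of_c_eq_neg_one A hji
  have hjj := isLadder_uH1_uB_self A j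
  rw [A.d_eq_of_c_eq_neg_one hij hji] at hji' hjj
  set δ : ℂ := (A.d i : ℂ)
  have h6δ : 6 * δ ≠ 0 := mul_ne_zero (by norm_num) (A.d_ne_zero i)
  -- `h_{i,1} + 2 h_{j,1}` kills `b_{i,·}` and shifts `b_{j,·}`
  have hzi := (isLadder_uH1_uB_self A i).smul_add_smul hji' (p := 1) (q := 2)
    (e := 0) (by ring)
  have hzj := (isLadder_uH1_uB_of_c_eq_neg_one A hij).smul_add_smul hjj (p := 1) (q := 2)
    (e := 6 * δ) (by ring)
  have hzX : IsLadder ((1 : ℂ) • uH1 A i + (2 : ℂ) • uH1 A j) (6 * δ)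
      (fun s => ⁅uB A i 0, uB A j s⁆) := fun s => by
    rw [hzi.lie_lie hzj]
    module
  have hzb : ⁅(1 : ℂ) • uH1 A i + (2 : ℂ) • uH1 A j, uB A i r⁆ = 0 := by
    rw [hzi, zero_smul]
  rw [hzX.lie_eq_smul h6δ hzb (fun s => hzj (r + s)) (uB_lie_uB_zero_lie_uB_zero A hij hji r) s,
    div_self h6δ, one_pow, mul_one]

theorem uB_zero_lie_uB_four_eq_zero {i j : I} (hij : A.c i j = -1) (hji : A.c j i = -1) :
    ⁅uB A i 0, uB A i 4⁆ = 0 := by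
  have hX : ∀ r, ⁅uB A j r, uB A i 0⁆ = ⁅uB A j 0, uB A i r⁆ := fun r =>
    uB_lie_uB A (A.ne_of_c_eq_neg_one hji) r 0
  have hF : ∀ r s, ⁅uB A j r, ⁅uB A j 0, uB A i s⁆⁆
      = ((-1) ^ (r + 1) * (A.d i : ℂ)) • uB A i (r + s) := by
    intro r s
    rw [uB_lie_uB_zero_lie_uB A hji hij, A.d_eq_of_c_eq_neg_one hij hji]
  have hG : ∀ s, ⁅uB A i 0, ⁅uB A j 0, uB A i s⁆⁆ = (A.d i : ℂ) • uB A j s := by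
    intro s
    rw [← lie_skew (uB A j 0), uB_lie_uB A (A.ne_of_c_eq_neg_one hij), lie_neg,
      uB_lie_uB_zero_lie_uB A hij hji 0, Nat.add_zero, Nat.zero_add]
    module
  -- Jacobi for `b_{j,1}, b_{i,0}, [b_{j,0}, b_{i,3}]` and `b_{j,3}, b_{i,0}, [b_{j,0}, b_{i,1}]`:
  -- the left-hand sides cancel by `hG`, the right-hand sides add up to `2 d_i [b_{i,0}, b_{i,4}]`.
  have e₁ := leibniz_lie (uB A j 1) (uB A i 0) ⁅uB A j 0, uB A i 3⁆
  have e₃ := leibniz_lie (uB A j 3) (uB A i 0) ⁅uB A j 0, uB A i 1⁆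
  rw [hG, hF, hX, uAlg_lie_smul, uAlg_lie_smul] at e₁ e₃
  norm_num only at e₁ e₃
  have h2δ : (2 * (A.d i : ℂ)) • ⁅uB A i 0, uB A i 4⁆ = 0 := by
    linear_combination (norm := module) -(e₁ + e₃) - (A.d i : ℂ) • lie_skew (uB A j 3) (uB A j 1)
      + lie_skew ⁅uB A j 0, uB A i 3⁆ ⁅uB A j 0, uB A i 1⁆
  exact (smul_eq_zero.mp h2δ).resolve_left (mul_ne_zero two_ne_zero (A.d_ne_zero i))

end UAlg

theorem U_hi4_vanishing_general
    {I : Type} [Fintype I] [DecidableEq I] (A : CartanData I)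
    (i j : I) (hij : A.c i j = -1) (hji : A.c j i = -1) :
    ⁅uH A i 1, uH A i 3⁆ = 0 ∧ uH A i 4 = 0 ∧ ⁅uB A i 0, uB A i 4⁆ = 0 ∧
      ⁅uB A i 1, uB A i 3⁆ = 0 := by
  have h₀₄ : ⁅uB A i 0, uB A i 4⁆ = 0 := uB_zero_lie_uB_four_eq_zero A hij hji
  have h₁₃ : ⁅uB A i 1, uB A i 3⁆ = 0 := by
    have h := uB_zero_lie_uB_four_self A i
    rw [h₀₄, eq_comm, smul_eq_zero] at h
    exact h.resolve_left (by norm_num)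
  refine ⟨?_, h₀₄, h₀₄, h₁₃⟩
  rw [uH_one_lie_uH_three, h₁₃, h₀₄, add_zero, smul_zero]

/-- in `𝒰`, if `c_{ij} = c_{ji} = -1` then `[h_{i,1}, h_{i,3}] = 0`,
`h_{i,4} = [b_{i,0}, b_{i,4}] = 0` and `[b_{i,1}, b_{i,3}] = 0`. -/
theorem U_hi4_vanishing
    {I : Type} [Fintype I] [DecidableEq I] [Nonempty I] (A : CartanData I)
    (i j : I) (hij : A.c i j = -1) (hji : A.c j i = -1) :
    ⁅uH A i 1, uH A i 3⁆ = 0 ∧ uH A i 4 = 0 ∧ ⁅uB A i 0, uB A i 4⁆ = 0 ∧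
      ⁅uB A i 1, uB A i 3⁆ = 0 :=
  U_hi4_vanishing_general A i j hij hji
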